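/- Let g : [0,T]×[0,T]×ℝ^n×ℝ^n×ℝ^m×ℝ^{m×d} → ℝ^m be bounded by L and Lipschitz in all its arguments with constant L, and let σ : [0,T]×ℝ^n → ℝ^{n×d} be bounded by L and Lipschitz in (s,x) with constant L. Then there is a constant K, depending only on L, T and α, such that for every S ∈ [0,T), every θ ∈ X[S,T] and every (t,ξ) ∈ [0,T]×ℝ^n, the function g^θ(τ,η) := g(t,τ,ξ,η, θ(τ,τ,η,η), θ_η(t,τ,ξ,η)σ(τ,η)), defined for (τ,η) ∈ [max(t,S),T]×ℝ^n (with θ_η the derivative of θ in its last variable), satisfies |g^θ|^{(α)}_{[max(t,S),T]×ℝ^n} ≤ K (1 + ‖θ‖_{X[S,T]}). -/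

import Mathlib

open scoped ENNReal NNReal BigOperators
open Set

noncomputable section

abbrev En (n : ℕ) : Type := EuclideanSpace ℝ (Fin n)

def sing (n : ℕ) (i : Fin n) : En n := EuclideanSpace.single i (1 : ℝ)

variable {n m : ℕ}

/-- sup norm `|φ|⁽⁰⁾` over `[S,T] × ℝⁿ`. -/
def nrm0 {V : Type*} [NormedAddCommGroup V] (S T : ℝ) (φ : ℝ → En n → V) : ℝ≥0∞ :=
  ⨆ (s : Icc S T) (x : En n), (‖φ s.1 x‖₊ : ℝ≥0∞)

/-- time Hölder seminorm `⟨φ⟩ₛ^(β)` over `[S,T] × ℝⁿ`. -/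
def hS {V : Type*} [NormedAddCommGroup V] (S T β : ℝ) (φ : ℝ → En n → V) : ℝ≥0∞ :=
  ⨆ (s : Icc S T) (s' : Icc S T) (x : En n),
    (‖φ s.1 x - φ s'.1 x‖₊ : ℝ≥0∞) / ENNReal.ofReal (|s.1 - s'.1| ^ β)

/-- space Hölder seminorm `⟨φ⟩ₓ^(α)` over `[S,T] × ℝⁿ`. -/
def hX {V : Type*} [NormedAddCommGroup V] (S T α : ℝ) (φ : ℝ → En n → V) : ℝ≥0∞ :=
  ⨆ (s : Icc S T) (x : En n) (x' : En n) (_ : dist x x' ≤ 1),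
    (‖φ s.1 x - φ s.1 x'‖₊ : ℝ≥0∞) / ENNReal.ofReal (dist x x' ^ α)

/-- `⟨φ⟩^(α) = ⟨φ⟩ₛ^(α/2) + ⟨φ⟩ₓ^(α)`. -/
def hol {V : Type*} [NormedAddCommGroup V] (S T α : ℝ) (φ : ℝ → En n → V) : ℝ≥0∞ :=
  hS S T (α/2) φ + hX S T α φ

/-- `|φ|^(α)`. -/
def nrmA {V : Type*} [NormedAddCommGroup V] (S T α : ℝ) (φ : ℝ → En n → V) : ℝ≥0∞ :=
  nrm0 S T φ + hol S T α φ

/-- spatial gradient. -/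
def Dx {V : Type*} [NormedAddCommGroup V] [NormedSpace ℝ V] (φ : ℝ → En n → V) :
    ℝ → En n → (En n →L[ℝ] V) := fun s x => fderiv ℝ (φ s) x

/-- spatial Hessian. -/
def Dxx {V : Type*} [NormedAddCommGroup V] [NormedSpace ℝ V] (φ : ℝ → En n → V) :
    ℝ → En n → (En n →L[ℝ] (En n →L[ℝ] V)) :=
  fun s x => fderiv ℝ (fun y => fderiv ℝ (φ s) y) x

/-- time derivative. -/
def Dt {V : Type*} [NormedAddCommGroup V] [NormedSpace ℝ V] (φ : ℝ → En n → V) :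
    ℝ → En n → V := fun s x => deriv (fun r => φ r x) s

/-- `|φ|^(1+α)`. -/
def nrm1A {V : Type*} [NormedAddCommGroup V] [NormedSpace ℝ V] (S T α : ℝ)
    (φ : ℝ → En n → V) : ℝ≥0∞ :=
  nrm0 S T φ + nrm0 S T (Dx φ) + hol S T α (Dx φ) + hS S T ((1+α)/2) φ

/-- `|φ|^(2+α)`. -/
def nrm2A {V : Type*} [NormedAddCommGroup V] [NormedSpace ℝ V] (S T α : ℝ)
    (φ : ℝ → En n → V) : ℝ≥0∞ :=
  nrm0 S T φ + nrm0 S T (Dx φ) + nrm0 S T (Dt φ) + nrm0 S T (Dxx φ)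
    + hol S T α (Dt φ) + hol S T α (Dxx φ) + hS S T ((1+α)/2) (Dx φ)

/-- sup norm over `ℝⁿ` (time–independent functions). -/
def xnrm0 {V : Type*} [NormedAddCommGroup V] (h : En n → V) : ℝ≥0∞ :=
  ⨆ x : En n, (‖h x‖₊ : ℝ≥0∞)

/-- Hölder seminorm over `ℝⁿ`. -/
def xhol {V : Type*} [NormedAddCommGroup V] (α : ℝ) (h : En n → V) : ℝ≥0∞ :=
  ⨆ (x : En n) (x' : En n) (_ : dist x x' ≤ 1),
    (‖h x - h x'‖₊ : ℝ≥0∞) / ENNReal.ofReal (dist x x' ^ α)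

/-- `|h|^(1+α)` on `ℝⁿ`. -/
def xnrm1A {V : Type*} [NormedAddCommGroup V] [NormedSpace ℝ V] (α : ℝ)
    (h : En n → V) : ℝ≥0∞ :=
  xnrm0 h + xnrm0 (fderiv ℝ h) + xhol α (fderiv ℝ h)

/-- `|h|^(2+α)` on `ℝⁿ`. -/
def xnrm2A {V : Type*} [NormedAddCommGroup V] [NormedSpace ℝ V] (α : ℝ)
    (h : En n → V) : ℝ≥0∞ :=
  xnrm0 h + xnrm0 (fderiv ℝ h) + xnrm0 (fderiv ℝ (fderiv ℝ h))
    + xhol α (fderiv ℝ (fderiv ℝ h))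

/-- uniform parabolicity (P1). -/
def P1 (n : ℕ) (T lam0 : ℝ) (a : ℝ → En n → Fin n → Fin n → ℝ) : Prop :=
  ∀ s ∈ Icc (0:ℝ) T, ∀ x ζ : En n,
    lam0 * ‖ζ‖^2 ≤ ∑ i, ∑ j, a s x i j * ζ i * ζ j

/-- regularity of the coefficients (P2). -/
def P2 (n : ℕ) (T α K0 : ℝ) (a : ℝ → En n → Fin n → Fin n → ℝ)
    (b : ℝ → En n → Fin n → ℝ) : Prop :=
  (∀ i j, ContinuousOn (fun p : ℝ × En n => a p.1 p.2 i j) (Icc 0 T ×ˢ univ)) ∧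
  (∀ i, ContinuousOn (fun p : ℝ × En n => b p.1 p.2 i) (Icc 0 T ×ˢ univ)) ∧
  (∃ C : ℝ, ∀ s ∈ Icc (0:ℝ) T, ∀ x : En n,
      (∀ i j, |a s x i j| ≤ C) ∧ (∀ i, |b s x i| ≤ C)) ∧
  (∀ i j, ∀ s ∈ Icc (0:ℝ) T, ∀ s' ∈ Icc (0:ℝ) T, ∀ x x' : En n,
      |a s x i j - a s' x' i j| ≤ K0 * (|s - s'| ^ (α/2) + ‖x - x'‖ ^ α)) ∧
  (∀ i, ∀ s ∈ Icc (0:ℝ) T, ∀ x x' : En n,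
      |b s x i - b s x' i| ≤ K0 * ‖x - x'‖ ^ α)

/-- bounded classical solution of the backward Cauchy problem (★) on `[S,T] × ℝⁿ`. -/
def IsClassicalSol (n : ℕ) (S T : ℝ) (a : ℝ → En n → Fin n → Fin n → ℝ)
    (b : ℝ → En n → Fin n → ℝ) (f : ℝ → En n → ℝ) (h : En n → ℝ)
    (v : ℝ → En n → ℝ) : Prop :=
  (∃ C : ℝ, ∀ s ∈ Icc S T, ∀ x : En n, |v s x| ≤ C) ∧
  ContinuousOn (fun p : ℝ × En n => v p.1 p.2) (Icc S T ×ˢ univ) ∧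
  (∀ x : En n, ∀ s ∈ Icc S T, DifferentiableAt ℝ (fun r => v r x) s) ∧
  (∀ s ∈ Icc S T, ContDiff ℝ 2 (v s)) ∧
  (∀ s ∈ Icc S T, ∀ x : En n,
    Dt v s x + (∑ i, ∑ j, a s x i j * Dxx v s x (sing n i) (sing n j))
      + (∑ i, b s x i * Dx v s x (sing n i)) + f s x = 0) ∧
  (∀ x : En n, v T x = h x)

/-- the `X[S,T]`-norm of `θ : Δ̂[S,T] × ℝⁿ × ℝⁿ → ℝᵐ`;  all inner norms are taken
over `[max(t,S),T] × ℝⁿ`. -/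
def Xnrm (n m : ℕ) (S T α : ℝ) (θ : ℝ → ℝ → En n → En n → En m) : ℝ≥0∞ :=
  ⨆ (t : Icc (0:ℝ) T) (ξ : En n),
    (nrm1A (max t.1 S) T α (fun s x => θ t.1 s ξ x)
      + nrm0 (max t.1 S) T (fun s x => deriv (fun r => θ r s ξ x) t.1)
      + nrm0 (max t.1 S) T (fun s x => fderiv ℝ (fun ξ' => θ t.1 s ξ' x) ξ)
      + nrm0 (max t.1 S) T
          (fun s x => deriv (fun r => fderiv ℝ (fun y => θ r s ξ y) x) t.1)
      + nrm0 (max t.1 S) T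
          (fun s x => fderiv ℝ (fun ξ' => fderiv ℝ (fun y => θ t.1 s ξ' y) x) ξ))

/-- membership in the Banach space `X[S,T]`. -/
def memX (n m : ℕ) (S T α : ℝ) (θ : ℝ → ℝ → En n → En n → En m) : Prop :=
  (∀ t ∈ Icc (0:ℝ) T, ∀ s ∈ Icc (max t S) T, ∀ ξ x : En n,
    DifferentiableAt ℝ (fun y => θ t s ξ y) x ∧
    DifferentiableAt ℝ (fun r => θ r s ξ x) t ∧
    DifferentiableAt ℝ (fun ξ' => θ t s ξ' x) ξ ∧
    DifferentiableAt ℝ (fun r => fderiv ℝ (fun y => θ r s ξ y) x) t ∧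
    DifferentiableAt ℝ (fun ξ' => fderiv ℝ (fun y => θ t s ξ' y) x) ξ) ∧
  Xnrm n m S T α θ ≠ ⊤

/-!
`g^θ` is the `L`-Lipschitz map `g` composed with `(τ, η) ↦ (θ(τ,τ,η,η), θ_η(t,τ,ξ,η) σ(τ,η))`,
so it suffices to control the increments of these two arguments by `‖θ‖_X`. The diagonal
`θ(τ,τ,η,η)` moves by at most `‖θ‖_X (|τ'-τ|^((1+α)/2) + |τ'-τ|)` in time (Hölder in `s`, mean
value theorem in `t`) and by `2 ‖θ‖_X |η-η'|` in space (mean value theorem in `x` and `ξ`), while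
`θ_η σ` inherits the `α/2`- and `α`-Hölder moduli of `θ_x` up to the bounds on `σ`. Since times
lie in `[0,T]` and the spatial seminorm only sees `|η-η'| ≤ 1`, all these increments are dominated
by `max 1 T · |τ'-τ|^(α/2)`, resp. `|η-η'|^α`, with constants linear in `1 + ‖θ‖_X`.
-/

section HolderNorms

variable {V : Type*} [NormedAddCommGroup V] {S T : ℝ} {φ : ℝ → En n → V}

theorem norm_le_toReal_mul_of_div_le {v : V} {d : ℝ} {B : ℝ≥0∞} (hd : 0 ≤ d) (hB : B ≠ ⊤)
    (h : (‖v‖₊ : ℝ≥0∞) / ENNReal.ofReal d ≤ B) : ‖v‖ ≤ B.toReal * d := by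
  rw [ENNReal.div_le_iff_le_mul (Or.inr hB) (Or.inl ENNReal.ofReal_ne_top)] at h
  simpa [ENNReal.toReal_mul, ENNReal.toReal_ofReal hd] using
    ENNReal.toReal_mono (ENNReal.mul_ne_top hB ENNReal.ofReal_ne_top) h

theorem div_le_ofReal_of_norm_le {v : V} {C d : ℝ} (hd : 0 ≤ d) (h : ‖v‖ ≤ C * d) :
    (‖v‖₊ : ℝ≥0∞) / ENNReal.ofReal d ≤ ENNReal.ofReal C := by
  refine ENNReal.div_le_of_le_mul ?_
  rw [← ENNReal.ofReal_mul' hd, ← enorm_eq_nnnorm, ← ofReal_norm]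
  exact ENNReal.ofReal_le_ofReal h

theorem norm_le_toReal_of_nrm0_le {B : ℝ≥0∞} (hB : B ≠ ⊤) (h : nrm0 S T φ ≤ B)
    {s : ℝ} (hs : s ∈ Icc S T) (x : En n) : ‖φ s x‖ ≤ B.toReal := by
  have hx : (‖φ s x‖₊ : ℝ≥0∞) ≤ B :=
    (le_iSup₂ (f := fun (s : Icc S T) (x : En n) => (‖φ s.1 x‖₊ : ℝ≥0∞)) ⟨s, hs⟩ x).trans h
  simpa using ENNReal.toReal_mono hB hx

theorem norm_sub_le_of_hS_le {β : ℝ} {B : ℝ≥0∞} (hB : B ≠ ⊤) (h : hS S T β φ ≤ B)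
    {s s' : ℝ} (hs : s ∈ Icc S T) (hs' : s' ∈ Icc S T) (x : En n) :
    ‖φ s x - φ s' x‖ ≤ B.toReal * |s - s'| ^ β :=
  norm_le_toReal_mul_of_div_le (by positivity) hB <| le_trans
    (le_iSup₂_of_le (⟨s, hs⟩ : Icc S T) (⟨s', hs'⟩ : Icc S T) <|
      le_iSup (fun x => (‖φ s x - φ s' x‖₊ : ℝ≥0∞) / ENNReal.ofReal (|s - s'| ^ β)) x) h

theorem norm_sub_le_of_hX_le {α : ℝ} {B : ℝ≥0∞} (hB : B ≠ ⊤) (h : hX S T α φ ≤ B)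
    {s : ℝ} (hs : s ∈ Icc S T) {x x' : En n} (hxx' : dist x x' ≤ 1) :
    ‖φ s x - φ s x'‖ ≤ B.toReal * dist x x' ^ α :=
  norm_le_toReal_mul_of_div_le (by positivity) hB <| le_trans
    (le_iSup₂_of_le (⟨s, hs⟩ : Icc S T) x <| le_iSup₂_of_le
      (f := fun x' (_ : dist x x' ≤ 1) =>
        (‖φ s x - φ s x'‖₊ : ℝ≥0∞) / ENNReal.ofReal (dist x x' ^ α)) x' hxx' le_rfl) h

theorem nrm0_le_ofReal {C : ℝ} (h : ∀ s ∈ Icc S T, ∀ x, ‖φ s x‖ ≤ C) :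
    nrm0 S T φ ≤ ENNReal.ofReal C :=
  iSup₂_le fun s x => by
    rw [← enorm_eq_nnnorm, ← ofReal_norm]
    exact ENNReal.ofReal_le_ofReal (h s s.2 x)

theorem hS_le_ofReal {β C : ℝ}
    (h : ∀ s ∈ Icc S T, ∀ s' ∈ Icc S T, s ≤ s' → ∀ x, ‖φ s x - φ s' x‖ ≤ C * (s' - s) ^ β) :
    hS S T β φ ≤ ENNReal.ofReal C := by
  refine iSup₂_le fun s s' => iSup_le fun x => div_le_ofReal_of_norm_le (by positivity) ?_
  rcases le_total s.1 s'.1 with hss' | hs's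
  · simpa [abs_of_nonpos (sub_nonpos.2 hss')] using h s s.2 s' s'.2 hss' x
  · simpa [norm_sub_rev, abs_of_nonneg (sub_nonneg.2 hs's)] using h s' s'.2 s s.2 hs's x

theorem hX_le_ofReal {α C : ℝ}
    (h : ∀ s ∈ Icc S T, ∀ x x', dist x x' ≤ 1 → ‖φ s x - φ s x'‖ ≤ C * dist x x' ^ α) :
    hX S T α φ ≤ ENNReal.ofReal C :=
  iSup₂_le fun s x => iSup₂_le fun x' hxx' =>
    div_le_ofReal_of_norm_le (by positivity) (h s s.2 x x' hxx')

end HolderNorms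

section XNorm

variable {V : Type*} [NormedAddCommGroup V] [NormedSpace ℝ V] {S T α : ℝ}

theorem nrm0_Dx_le_nrm1A (φ : ℝ → En n → V) : nrm0 S T (Dx φ) ≤ nrm1A S T α φ := by
  unfold nrm1A
  exact le_add_self.trans (le_self_add.trans le_self_add)

theorem hS_Dx_le_nrm1A (φ : ℝ → En n → V) : hS S T (α / 2) (Dx φ) ≤ nrm1A S T α φ := by
  unfold nrm1A hol
  exact le_self_add.trans (le_add_self.trans le_self_add)

theorem hX_Dx_le_nrm1A (φ : ℝ → En n → V) : hX S T α (Dx φ) ≤ nrm1A S T α φ := by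
  unfold nrm1A hol
  exact le_add_self.trans (le_add_self.trans le_self_add)

theorem hS_le_nrm1A (φ : ℝ → En n → V) : hS S T ((1 + α) / 2) φ ≤ nrm1A S T α φ :=
  le_add_self

variable {θ : ℝ → ℝ → En n → En n → En m} {t : ℝ} (ξ : En n)

theorem nrm1A_le_Xnrm (ht : t ∈ Icc 0 T) :
    nrm1A (max t S) T α (fun s x => θ t s ξ x) ≤ Xnrm n m S T α θ := by
  unfold Xnrm
  refine le_trans ?_ (le_iSup₂ (⟨t, ht⟩ : Icc (0:ℝ) T) ξ)
  exact le_self_add.trans (le_self_add.trans (le_self_add.trans le_self_add))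

theorem nrm0_dt_le_Xnrm (ht : t ∈ Icc 0 T) :
    nrm0 (max t S) T (fun s x => deriv (fun r => θ r s ξ x) t) ≤ Xnrm n m S T α θ := by
  unfold Xnrm
  refine le_trans ?_ (le_iSup₂ (⟨t, ht⟩ : Icc (0:ℝ) T) ξ)
  exact le_add_self.trans (le_self_add.trans (le_self_add.trans le_self_add))

theorem nrm0_dξ_le_Xnrm (ht : t ∈ Icc 0 T) :
    nrm0 (max t S) T (fun s x => fderiv ℝ (fun ξ' => θ t s ξ' x) ξ) ≤ Xnrm n m S T α θ := by
  unfold Xnrm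
  refine le_trans ?_ (le_iSup₂ (⟨t, ht⟩ : Icc (0:ℝ) T) ξ)
  exact le_add_self.trans (le_self_add.trans le_self_add)

end XNorm

section XNormPointwise

variable {S T α : ℝ} {θ : ℝ → ℝ → En n → En n → En m} {t s s' : ℝ} (ξ : En n)

theorem norm_dx_le_Xnrm (hθ : Xnrm n m S T α θ ≠ ⊤) (ht : t ∈ Icc 0 T)
    (hs : s ∈ Icc (max t S) T) (x : En n) :
    ‖fderiv ℝ (fun y => θ t s ξ y) x‖ ≤ (Xnrm n m S T α θ).toReal :=
  norm_le_toReal_of_nrm0_le hθ ((nrm0_Dx_le_nrm1A _).trans (nrm1A_le_Xnrm ξ ht)) hs x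

theorem norm_dx_sub_time_le_Xnrm (hθ : Xnrm n m S T α θ ≠ ⊤) (ht : t ∈ Icc 0 T)
    (hs : s ∈ Icc (max t S) T) (hs' : s' ∈ Icc (max t S) T) (x : En n) :
    ‖fderiv ℝ (fun y => θ t s ξ y) x - fderiv ℝ (fun y => θ t s' ξ y) x‖
      ≤ (Xnrm n m S T α θ).toReal * |s - s'| ^ (α / 2) :=
  norm_sub_le_of_hS_le hθ ((hS_Dx_le_nrm1A _).trans (nrm1A_le_Xnrm ξ ht)) hs hs' x

theorem norm_dx_sub_space_le_Xnrm (hθ : Xnrm n m S T α θ ≠ ⊤) (ht : t ∈ Icc 0 T)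
    (hs : s ∈ Icc (max t S) T) {x x' : En n} (hxx' : dist x x' ≤ 1) :
    ‖fderiv ℝ (fun y => θ t s ξ y) x - fderiv ℝ (fun y => θ t s ξ y) x'‖
      ≤ (Xnrm n m S T α θ).toReal * dist x x' ^ α :=
  norm_sub_le_of_hX_le hθ ((hX_Dx_le_nrm1A _).trans (nrm1A_le_Xnrm ξ ht)) hs hxx'

theorem norm_sub_time_le_Xnrm (hθ : Xnrm n m S T α θ ≠ ⊤) (ht : t ∈ Icc 0 T)
    (hs : s ∈ Icc (max t S) T) (hs' : s' ∈ Icc (max t S) T) (x : En n) :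
    ‖θ t s ξ x - θ t s' ξ x‖ ≤ (Xnrm n m S T α θ).toReal * |s - s'| ^ ((1 + α) / 2) :=
  norm_sub_le_of_hS_le hθ ((hS_le_nrm1A _).trans (nrm1A_le_Xnrm ξ ht)) hs hs' x

theorem norm_dt_le_Xnrm (hθ : Xnrm n m S T α θ ≠ ⊤) (ht : t ∈ Icc 0 T)
    (hs : s ∈ Icc (max t S) T) (x : En n) :
    ‖deriv (fun r => θ r s ξ x) t‖ ≤ (Xnrm n m S T α θ).toReal :=
  norm_le_toReal_of_nrm0_le hθ (nrm0_dt_le_Xnrm ξ ht) hs x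

theorem norm_dξ_le_Xnrm (hθ : Xnrm n m S T α θ ≠ ⊤) (ht : t ∈ Icc 0 T)
    (hs : s ∈ Icc (max t S) T) (x : En n) :
    ‖fderiv ℝ (fun ξ' => θ t s ξ' x) ξ‖ ≤ (Xnrm n m S T α θ).toReal :=
  norm_le_toReal_of_nrm0_le hθ (nrm0_dξ_le_Xnrm ξ ht) hs x

end XNormPointwise

section Diagonal

variable {S T α : ℝ} {θ : ℝ → ℝ → En n → En n → En m}

theorem norm_diag_sub_time_le (hθ : memX n m S T α θ) (hS0 : 0 ≤ S) {τ τ' : ℝ}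
    (hτ : τ ∈ Icc S T) (hττ' : τ ≤ τ') (hτ' : τ' ≤ T) (η : En n) :
    ‖θ τ τ η η - θ τ' τ' η η‖
      ≤ (Xnrm n m S T α θ).toReal * ((τ' - τ) ^ ((1 + α) / 2) + (τ' - τ)) := by
  have hSτ' : S ≤ τ' := hτ.1.trans hττ'
  have mem_domain : ∀ r ∈ Icc τ τ', r ∈ Icc 0 T ∧ τ' ∈ Icc (max r S) T := fun r hr =>
    ⟨⟨hS0.trans (hτ.1.trans hr.1), hr.2.trans hτ'⟩, max_le hr.2 hSτ', hτ'⟩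
  have step_s : ‖θ τ τ η η - θ τ τ' η η‖
      ≤ (Xnrm n m S T α θ).toReal * (τ' - τ) ^ ((1 + α) / 2) := by
    have h := norm_sub_time_le_Xnrm η hθ.2 (mem_domain τ (left_mem_Icc.2 hττ')).1
      ⟨max_le le_rfl hτ.1, hτ.2⟩ (mem_domain τ (left_mem_Icc.2 hττ')).2 η
    rwa [abs_sub_comm, abs_of_nonneg (sub_nonneg.2 hττ')] at h
  have step_t : ‖θ τ τ' η η - θ τ' τ' η η‖ ≤ (Xnrm n m S T α θ).toReal * (τ' - τ) := by
    rw [norm_sub_rev]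
    refine norm_image_sub_le_of_norm_deriv_le_segment' (f := fun r => θ r τ' η η)
      (f' := deriv fun r => θ r τ' η η)
      (fun r hr => ?_) (fun r hr => ?_) τ' (right_mem_Icc.2 hττ')
    · obtain ⟨hr0T, hτ'r⟩ := mem_domain r hr
      exact (hθ.1 r hr0T τ' hτ'r η η).2.1.hasDerivAt.hasDerivWithinAt
    · obtain ⟨hr0T, hτ'r⟩ := mem_domain r (Ico_subset_Icc_self hr)
      exact norm_dt_le_Xnrm η hθ.2 hr0T hτ'r η
  calc ‖θ τ τ η η - θ τ' τ' η η‖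
      ≤ ‖θ τ τ η η - θ τ τ' η η‖ + ‖θ τ τ' η η - θ τ' τ' η η‖ :=
        norm_sub_le_norm_sub_add_norm_sub _ _ _
    _ ≤ _ := by rw [mul_add]; exact add_le_add step_s step_t

theorem norm_diag_sub_space_le (hθ : memX n m S T α θ) (hS0 : 0 ≤ S) {τ : ℝ}
    (hτ : τ ∈ Icc S T) (η η' : En n) :
    ‖θ τ τ η η - θ τ τ η' η'‖ ≤ 2 * (Xnrm n m S T α θ).toReal * ‖η - η'‖ := by
  have hτ0T : τ ∈ Icc 0 T := ⟨hS0.trans hτ.1, hτ.2⟩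
  have hττ : τ ∈ Icc (max τ S) T := ⟨max_le le_rfl hτ.1, hτ.2⟩
  have step_x : ‖θ τ τ η η - θ τ τ η η'‖ ≤ (Xnrm n m S T α θ).toReal * ‖η - η'‖ :=
    convex_univ.norm_image_sub_le_of_norm_fderiv_le (f := fun y => θ τ τ η y)
      (fun y _ => (hθ.1 τ hτ0T τ hττ η y).1) (fun y _ => norm_dx_le_Xnrm η hθ.2 hτ0T hττ y)
      (mem_univ η') (mem_univ η)
  have step_ξ : ‖θ τ τ η η' - θ τ τ η' η'‖ ≤ (Xnrm n m S T α θ).toReal * ‖η - η'‖ :=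
    convex_univ.norm_image_sub_le_of_norm_fderiv_le (f := fun ζ => θ τ τ ζ η')
      (fun ζ _ => (hθ.1 τ hτ0T τ hττ ζ η').2.2.1) (fun ζ _ => norm_dξ_le_Xnrm ζ hθ.2 hτ0T hττ η')
      (mem_univ η') (mem_univ η)
  calc ‖θ τ τ η η - θ τ τ η' η'‖
      ≤ ‖θ τ τ η η - θ τ τ η η'‖ + ‖θ τ τ η η' - θ τ τ η' η'‖ :=
        norm_sub_le_norm_sub_add_norm_sub _ _ _
    _ ≤ _ := by linarith

end Diagonal

theorem Real.rpow_le_mul_rpow_of_le {r M c e : ℝ} (hr : 0 ≤ r) (hrM : r ≤ M) (hM : 1 ≤ M)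
    (hc : 0 ≤ c) (hce : c ≤ e) (he : e ≤ c + 1) : r ^ e ≤ M * r ^ c := by
  have hM' : r ^ (e - c) ≤ M :=
    calc r ^ (e - c) ≤ M ^ (e - c) := Real.rpow_le_rpow hr hrM (sub_nonneg.2 hce)
      _ ≤ M ^ (1 : ℝ) := Real.rpow_le_rpow_of_exponent_le hM (by linarith)
      _ = M := Real.rpow_one M
  calc r ^ e = r ^ (e - c) * r ^ c := by
        rw [← Real.rpow_add_of_nonneg hr (sub_nonneg.2 hce) hc, sub_add_cancel]
    _ ≤ M * r ^ c := mul_le_mul_of_nonneg_right hM' (Real.rpow_nonneg hr c)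

theorem ContinuousLinearMap.norm_comp_sub_comp_le {𝕜 E F G : Type*} [NontriviallyNormedField 𝕜]
    [SeminormedAddCommGroup E] [SeminormedAddCommGroup F] [SeminormedAddCommGroup G]
    [NormedSpace 𝕜 E] [NormedSpace 𝕜 F] [NormedSpace 𝕜 G] (A A' : F →L[𝕜] G) (B B' : E →L[𝕜] F) :
    ‖A.comp B - A'.comp B'‖ ≤ ‖A - A'‖ * ‖B‖ + ‖A'‖ * ‖B - B'‖ := by
  have hsplit : A.comp B - A'.comp B' = (A - A').comp B + A'.comp (B - B') := by
    rw [ContinuousLinearMap.sub_comp, ContinuousLinearMap.comp_sub]; abel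
  rw [hsplit]
  exact (norm_add_le _ _).trans (add_le_add (opNorm_comp_le _ _) (opNorm_comp_le _ _))

def composedGenerator {d : ℕ} (g : ℝ → ℝ → En n → En n → En m → (En d →L[ℝ] En m) → En m)
    (σ : ℝ → En n → (En d →L[ℝ] En n)) (θ : ℝ → ℝ → En n → En n → En m) (t : ℝ) (ξ : En n) :
    ℝ → En n → En m :=
  fun τ η => g t τ ξ η (θ τ τ η η) ((fderiv ℝ (fun y => θ t τ ξ y) η).comp (σ τ η))

section ComposedGenerator

variable {d : ℕ} {S T α L : ℝ} {g : ℝ → ℝ → En n → En n → En m → (En d →L[ℝ] En m) → En m}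
  {σ : ℝ → En n → (En d →L[ℝ] En n)} {θ : ℝ → ℝ → En n → En n → En m} {t : ℝ} {ξ : En n}

theorem norm_composedGenerator_sub_le
    (hgL : ∀ (t t' s s' : ℝ) (ξ ξ' x x' : En n) (y y' : En m) (z z' : En d →L[ℝ] En m),
      ‖g t s ξ x y z - g t' s' ξ' x' y' z'‖
        ≤ L * (|t - t'| + |s - s'| + ‖ξ - ξ'‖ + ‖x - x'‖ + ‖y - y'‖ + ‖z - z'‖))
    (τ τ' : ℝ) (η η' : En n) :
    ‖composedGenerator g σ θ t ξ τ η - composedGenerator g σ θ t ξ τ' η'‖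
      ≤ L * (|τ - τ'| + ‖η - η'‖ + ‖θ τ τ η η - θ τ' τ' η' η'‖
        + ‖(fderiv ℝ (fun y => θ t τ ξ y) η).comp (σ τ η)
            - (fderiv ℝ (fun y => θ t τ' ξ y) η').comp (σ τ' η')‖) := by
  simpa [composedGenerator] using hgL t t τ τ' ξ ξ η η' _ _ _ _

theorem nrm0_composedGenerator_le (hgB : ∀ t s ξ x y z, ‖g t s ξ x y z‖ ≤ L) :
    nrm0 S T (composedGenerator g σ θ t ξ) ≤ ENNReal.ofReal L :=
  nrm0_le_ofReal fun _ _ _ => hgB _ _ _ _ _ _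

theorem norm_dx_comp_sub_time_le (hσB : ∀ s x, ‖σ s x‖ ≤ L)
    (hσL : ∀ s s' x x', ‖σ s x - σ s' x'‖ ≤ L * (|s - s'| + ‖x - x'‖))
    (hθ : Xnrm n m S T α θ ≠ ⊤) (ht : t ∈ Icc 0 T) {τ τ' : ℝ}
    (hτ : τ ∈ Icc (max t S) T) (hτ' : τ' ∈ Icc (max t S) T) (η : En n) :
    ‖(fderiv ℝ (fun y => θ t τ ξ y) η).comp (σ τ η)
        - (fderiv ℝ (fun y => θ t τ' ξ y) η).comp (σ τ' η)‖
      ≤ (Xnrm n m S T α θ).toReal * L * (|τ - τ'| ^ (α / 2) + |τ - τ'|) := by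
  have hσ : ‖σ τ η - σ τ' η‖ ≤ L * |τ - τ'| := by simpa using hσL τ τ' η η
  have hN : 0 ≤ (Xnrm n m S T α θ).toReal := ENNReal.toReal_nonneg
  calc _ ≤ _ := ContinuousLinearMap.norm_comp_sub_comp_le _ _ _ _
    _ ≤ (Xnrm n m S T α θ).toReal * |τ - τ'| ^ (α / 2) * L
          + (Xnrm n m S T α θ).toReal * (L * |τ - τ'|) := by
        gcongr
        · exact norm_dx_sub_time_le_Xnrm ξ hθ ht hτ hτ' η
        · exact hσB τ η
        · exact norm_dx_le_Xnrm ξ hθ ht hτ' η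
    _ = _ := by ring

theorem norm_dx_comp_sub_space_le (hσB : ∀ s x, ‖σ s x‖ ≤ L)
    (hσL : ∀ s s' x x', ‖σ s x - σ s' x'‖ ≤ L * (|s - s'| + ‖x - x'‖))
    (hθ : Xnrm n m S T α θ ≠ ⊤) (ht : t ∈ Icc 0 T) {τ : ℝ} (hτ : τ ∈ Icc (max t S) T)
    {η η' : En n} (hηη' : dist η η' ≤ 1) :
    ‖(fderiv ℝ (fun y => θ t τ ξ y) η).comp (σ τ η)
        - (fderiv ℝ (fun y => θ t τ ξ y) η').comp (σ τ η')‖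
      ≤ (Xnrm n m S T α θ).toReal * L * (dist η η' ^ α + dist η η') := by
  have hσ : ‖σ τ η - σ τ η'‖ ≤ L * dist η η' := by simpa [dist_eq_norm] using hσL τ τ η η'
  have hN : 0 ≤ (Xnrm n m S T α θ).toReal := ENNReal.toReal_nonneg
  calc _ ≤ _ := ContinuousLinearMap.norm_comp_sub_comp_le _ _ _ _
    _ ≤ (Xnrm n m S T α θ).toReal * dist η η' ^ α * L
          + (Xnrm n m S T α θ).toReal * (L * dist η η') := by
        gcongr
        · exact norm_dx_sub_space_le_Xnrm ξ hθ ht hτ hηη'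
        · exact hσB τ η
        · exact norm_dx_le_Xnrm ξ hθ ht hτ η'
    _ = _ := by ring

theorem hS_composedGenerator_le (hL : 0 ≤ L) (hα : 0 ≤ α) (hα2 : α ≤ 2)
    (hgL : ∀ (t t' s s' : ℝ) (ξ ξ' x x' : En n) (y y' : En m) (z z' : En d →L[ℝ] En m),
      ‖g t s ξ x y z - g t' s' ξ' x' y' z'‖
        ≤ L * (|t - t'| + |s - s'| + ‖ξ - ξ'‖ + ‖x - x'‖ + ‖y - y'‖ + ‖z - z'‖))
    (hσB : ∀ s x, ‖σ s x‖ ≤ L)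
    (hσL : ∀ s s' x x', ‖σ s x - σ s' x'‖ ≤ L * (|s - s'| + ‖x - x'‖))
    (hθ : memX n m S T α θ) (hS0 : 0 ≤ S) (ht : t ∈ Icc 0 T) :
    hS (max t S) T (α / 2) (composedGenerator g σ θ t ξ)
      ≤ ENNReal.ofReal (2 * L * max 1 T * (1 + L) * (1 + (Xnrm n m S T α θ).toReal)) := by
  refine hS_le_ofReal fun τ hτ τ' hτ' hττ' η => ?_
  set N := (Xnrm n m S T α θ).toReal
  set M := max 1 T
  have hN : 0 ≤ N := ENNReal.toReal_nonneg
  have hM : 1 ≤ M := le_max_left 1 T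
  have hτS : τ ∈ Icc S T := ⟨(le_max_right t S).trans hτ.1, hτ.2⟩
  have hΔ : 0 ≤ τ' - τ := sub_nonneg.2 hττ'
  have hΔM : τ' - τ ≤ M := by linarith [hτ'.2, hτS.1, le_max_right 1 T]
  have habs : |τ - τ'| = τ' - τ := by rw [abs_sub_comm, abs_of_nonneg hΔ]
  have hpow : 0 ≤ (τ' - τ) ^ (α / 2) := Real.rpow_nonneg hΔ _
  have hlin : τ' - τ ≤ M * (τ' - τ) ^ (α / 2) := by
    simpa using Real.rpow_le_mul_rpow_of_le (e := 1) hΔ hΔM hM (by linarith) (by linarith)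
      (by linarith)
  have hhalf : (τ' - τ) ^ ((1 + α) / 2) ≤ M * (τ' - τ) ^ (α / 2) :=
    Real.rpow_le_mul_rpow_of_le hΔ hΔM hM (by linarith) (by linarith) (by linarith)
  have hy := norm_diag_sub_time_le hθ hS0 hτS hττ' hτ'.2 η
  have hz := norm_dx_comp_sub_time_le (ξ := ξ) hσB hσL hθ.2 ht hτ hτ' η
  rw [habs] at hz
  calc _ ≤ _ := norm_composedGenerator_sub_le hgL τ τ' η η
    _ ≤ L * (M * (τ' - τ) ^ (α / 2) + 0 + N * (M * (τ' - τ) ^ (α / 2) + M * (τ' - τ) ^ (α / 2))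
          + N * L * ((τ' - τ) ^ (α / 2) + M * (τ' - τ) ^ (α / 2))) := by
        rw [habs, sub_self, norm_zero]
        gcongr
        · exact hy.trans (by gcongr)
        · exact hz.trans (by gcongr)
    _ ≤ 2 * L * M * (1 + L) * (1 + N) * (τ' - τ) ^ (α / 2) := by
        nlinarith [mul_nonneg (mul_nonneg (mul_nonneg hL (by linarith : (0:ℝ) ≤ M)) hpow)
          (by linarith : (0:ℝ) ≤ 1 + 2 * L),
          mul_nonneg (mul_nonneg (mul_nonneg (mul_nonneg hL hL) hN) hpow)
          (by linarith : (0:ℝ) ≤ M - 1)]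

theorem hX_composedGenerator_le (hL : 0 ≤ L) (hα : 0 ≤ α) (hα1 : α ≤ 1)
    (hgL : ∀ (t t' s s' : ℝ) (ξ ξ' x x' : En n) (y y' : En m) (z z' : En d →L[ℝ] En m),
      ‖g t s ξ x y z - g t' s' ξ' x' y' z'‖
        ≤ L * (|t - t'| + |s - s'| + ‖ξ - ξ'‖ + ‖x - x'‖ + ‖y - y'‖ + ‖z - z'‖))
    (hσB : ∀ s x, ‖σ s x‖ ≤ L)
    (hσL : ∀ s s' x x', ‖σ s x - σ s' x'‖ ≤ L * (|s - s'| + ‖x - x'‖))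
    (hθ : memX n m S T α θ) (hS0 : 0 ≤ S) (ht : t ∈ Icc 0 T) :
    hX (max t S) T α (composedGenerator g σ θ t ξ)
      ≤ ENNReal.ofReal (2 * L * (1 + L) * (1 + (Xnrm n m S T α θ).toReal)) := by
  refine hX_le_ofReal fun τ hτ η η' hηη' => ?_
  set N := (Xnrm n m S T α θ).toReal
  have hN : 0 ≤ N := ENNReal.toReal_nonneg
  have hτS : τ ∈ Icc S T := ⟨(le_max_right t S).trans hτ.1, hτ.2⟩
  have hpow : 0 ≤ dist η η' ^ α := Real.rpow_nonneg dist_nonneg _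
  have hlin : dist η η' ≤ dist η η' ^ α := by
    simpa using Real.rpow_le_mul_rpow_of_le (M := 1) (e := 1) dist_nonneg hηη' le_rfl hα hα1
      (by linarith)
  have hy := norm_diag_sub_space_le hθ hS0 hτS η η'
  rw [← dist_eq_norm η η'] at hy
  have hz := norm_dx_comp_sub_space_le (ξ := ξ) hσB hσL hθ.2 ht hτ hηη'
  calc _ ≤ _ := norm_composedGenerator_sub_le hgL τ τ η η'
    _ ≤ L * (0 + dist η η' ^ α + 2 * N * dist η η' ^ α
          + N * L * (dist η η' ^ α + dist η η' ^ α)) := by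
        rw [sub_self, abs_zero, ← dist_eq_norm η η']
        gcongr
        · exact hy.trans (by gcongr)
        · exact hz.trans (by gcongr)
    _ ≤ 2 * L * (1 + L) * (1 + N) * dist η η' ^ α := by
        nlinarith [mul_nonneg (mul_nonneg hL hpow) (by linarith : (0:ℝ) ≤ 1 + 2 * L)]

end ComposedGenerator

theorem stmt_6_general (n m d : ℕ) (α T L : ℝ) (hα : 0 < α) (hα1 : α < 1) :
    ∃ K : ℝ≥0,
      ∀ (g : ℝ → ℝ → En n → En n → En m → (En d →L[ℝ] En m) → En m)
        (σ : ℝ → En n → (En d →L[ℝ] En n)),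
        (∀ (t s : ℝ) (ξ x : En n) (y : En m) (z : En d →L[ℝ] En m),
          ‖g t s ξ x y z‖ ≤ L) →
        (∀ (t t' s s' : ℝ) (ξ ξ' x x' : En n) (y y' : En m)
            (z z' : En d →L[ℝ] En m),
          ‖g t s ξ x y z - g t' s' ξ' x' y' z'‖
            ≤ L * (|t - t'| + |s - s'| + ‖ξ - ξ'‖ + ‖x - x'‖ + ‖y - y'‖ + ‖z - z'‖)) →
        (∀ (s : ℝ) (x : En n), ‖σ s x‖ ≤ L) →
        (∀ (s s' : ℝ) (x x' : En n), ‖σ s x - σ s' x'‖ ≤ L * (|s - s'| + ‖x - x'‖)) →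
        ∀ S : ℝ, 0 ≤ S → S < T →
        ∀ θ : ℝ → ℝ → En n → En n → En m, memX n m S T α θ →
        ∀ t ∈ Icc (0:ℝ) T, ∀ ξ : En n,
          nrmA (max t S) T α
            (fun τ η => g t τ ξ η (θ τ τ η η)
              ((fderiv ℝ (fun y => θ t τ ξ y) η).comp (σ τ η)))
            ≤ (K : ℝ≥0∞) * (1 + Xnrm n m S T α θ) := by
  set K : ℝ := L + 2 * L * max 1 T * (1 + L) + 2 * L * (1 + L)
  refine ⟨K.toNNReal, fun g σ hgB hgL hσB hσL S hS0 _ θ hθ t ht ξ => ?_⟩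
  set N := (Xnrm n m S T α θ).toReal
  have hN : 0 ≤ N := ENNReal.toReal_nonneg
  have hL : 0 ≤ L := (norm_nonneg _).trans (hgB 0 0 0 0 0 0)
  have hK : 0 ≤ K := by positivity
  have sup_le : nrm0 (max t S) T (composedGenerator g σ θ t ξ) ≤ ENNReal.ofReal L :=
    nrm0_composedGenerator_le hgB
  have time_le := hS_composedGenerator_le (ξ := ξ) hL hα.le (by linarith) hgL hσB hσL hθ hS0 ht
  have space_le := hX_composedGenerator_le (ξ := ξ) hL hα.le hα1.le hgL hσB hσL hθ hS0 ht
  calc nrmA (max t S) T α (composedGenerator g σ θ t ξ)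
      ≤ ENNReal.ofReal L + (ENNReal.ofReal (2 * L * max 1 T * (1 + L) * (1 + N))
          + ENNReal.ofReal (2 * L * (1 + L) * (1 + N))) :=
        add_le_add sup_le (add_le_add time_le space_le)
    _ = ENNReal.ofReal (L + 2 * L * max 1 T * (1 + L) * (1 + N) + 2 * L * (1 + L) * (1 + N)) := by
        rw [← ENNReal.ofReal_add (by positivity) (by positivity), add_assoc,
          ← ENNReal.ofReal_add hL (by positivity)]
    _ ≤ ENNReal.ofReal (K * (1 + N)) := ENNReal.ofReal_le_ofReal (by nlinarith [mul_nonneg hL hN])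
    _ = K.toNNReal * (1 + Xnrm n m S T α θ) := by
        rw [ENNReal.ofReal_mul hK, ENNReal.ofReal_add zero_le_one hN, ENNReal.ofReal_one,
          ENNReal.ofReal_toReal hθ.2, ENNReal.ofReal]

/-- Hölder bound for the composed generator `g^θ`. -/
theorem stmt_6 (n m d : ℕ) (hn : 1 ≤ n) (hm : 1 ≤ m) (hd : 1 ≤ d)
    (α T L : ℝ) (hα : 0 < α) (hα1 : α < 1) (hT : 0 < T) (hL : 0 < L) :
    ∃ K : ℝ≥0,
      ∀ (g : ℝ → ℝ → En n → En n → En m → (En d →L[ℝ] En m) → En m)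
        (σ : ℝ → En n → (En d →L[ℝ] En n)),
        (∀ (t s : ℝ) (ξ x : En n) (y : En m) (z : En d →L[ℝ] En m),
          ‖g t s ξ x y z‖ ≤ L) →
        (∀ (t t' s s' : ℝ) (ξ ξ' x x' : En n) (y y' : En m)
            (z z' : En d →L[ℝ] En m),
          ‖g t s ξ x y z - g t' s' ξ' x' y' z'‖
            ≤ L * (|t - t'| + |s - s'| + ‖ξ - ξ'‖ + ‖x - x'‖ + ‖y - y'‖ + ‖z - z'‖)) →
        (∀ (s : ℝ) (x : En n), ‖σ s x‖ ≤ L) →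
        (∀ (s s' : ℝ) (x x' : En n), ‖σ s x - σ s' x'‖ ≤ L * (|s - s'| + ‖x - x'‖)) →
        ∀ S : ℝ, 0 ≤ S → S < T →
        ∀ θ : ℝ → ℝ → En n → En n → En m, memX n m S T α θ →
        ∀ t ∈ Icc (0:ℝ) T, ∀ ξ : En n,
          nrmA (max t S) T α
            (fun τ η => g t τ ξ η (θ τ τ η η)
              ((fderiv ℝ (fun y => θ t τ ξ y) η).comp (σ τ η)))
            ≤ (K : ℝ≥0∞) * (1 + Xnrm n m S T α θ) :=
  stmt_6_general n m d α T L hα hα1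

end
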